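/- Let B be a von Neumann algebra on a complex Hilbert space G, let E ⊆ B(G,H) be a concrete von Neumann B-module, and let ρ' : B' → B(H) be its commutant lifting. Write an operator S ∈ B(G ⊕ H) on the Hilbert space direct sum G ⊕ H as a 2×2 block matrix with components S₁₁ ∈ B(G), S₁₂ ∈ B(H,G), S₂₁ ∈ B(G,H), S₂₂ ∈ B(H). Then S commutes with every operator of the form (g,h) ↦ (b' g, ρ'(b') h), b' ∈ B', if and only if S₁₁ ∈ B, S₂₁ ∈ E, S₁₂* ∈ E, and S₂₂ commutes with ρ'(b') for every b' ∈ B'. -/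

import Mathlib

noncomputable section

variable {G H K : Type*}
  [NormedAddCommGroup G] [InnerProductSpace ℂ G] [CompleteSpace G]
  [NormedAddCommGroup H] [InnerProductSpace ℂ H] [CompleteSpace H]
  [NormedAddCommGroup K] [InnerProductSpace ℂ K] [CompleteSpace K]

/-- The weak operator topology on `G →L[ℂ] H`: the coarsest topology making all the maps
`T ↦ ⟨h, T g⟩` continuous. -/
def wot (G H : Type*) [NormedAddCommGroup G] [InnerProductSpace ℂ G]
    [NormedAddCommGroup H] [InnerProductSpace ℂ H] : TopologicalSpace (G →L[ℂ] H) :=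
  ⨅ p : G × H, TopologicalSpace.induced
    (fun T : G →L[ℂ] H => (inner ℂ p.2 (T p.1) : ℂ)) inferInstance

/-- The set `{x g : x ∈ E, g ∈ G}` spans a dense subspace of `H`. -/
def SpansDensely (E : Set (G →L[ℂ] H)) : Prop :=
  Dense ((Submodule.span ℂ {h : H | ∃ x ∈ E, ∃ g : G, x g = h} : Submodule ℂ H) : Set H)

/-- `E ⊆ B(G,H)` is a concrete von Neumann `B`-module: a complex linear subspace, stable under
composition with elements of `B` from the right, with `x* ∘ y ∈ B` for all `x, y ∈ E`, acting
nondegenerately on `G`, and closed in the weak operator topology. -/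
structure IsConcreteVNModule (B : VonNeumannAlgebra G) (E : Set (G →L[ℂ] H)) : Prop where
  zero_mem : (0 : G →L[ℂ] H) ∈ E
  add_mem : ∀ x ∈ E, ∀ y ∈ E, x + y ∈ E
  smul_mem : ∀ (c : ℂ), ∀ x ∈ E, c • x ∈ E
  comp_mem : ∀ x ∈ E, ∀ b ∈ B, x.comp b ∈ E
  adjoint_comp_mem : ∀ x ∈ E, ∀ y ∈ E, (ContinuousLinearMap.adjoint x).comp y ∈ B
  dense : SpansDensely E
  isClosed : @IsClosed _ (wot G H) E

/-- A map `ρ : B(G) → B(H)` restricts on the subset `S ⊆ B(G)` to a normal unital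
`*`-homomorphism: it is linear, multiplicative and star-preserving on `S`, unital, and its
restriction to the closed unit ball of `S` is continuous from the weak operator topology of
`B(G)` to the weak operator topology of `B(H)`. -/
structure IsNormalUnitalStarHom (S : Set (G →L[ℂ] G)) (ρ : (G →L[ℂ] G) → (H →L[ℂ] H)) :
    Prop where
  map_add : ∀ a ∈ S, ∀ b ∈ S, ρ (a + b) = ρ a + ρ b
  map_smul : ∀ (c : ℂ), ∀ a ∈ S, ρ (c • a) = c • ρ a
  map_mul : ∀ a ∈ S, ∀ b ∈ S, ρ (a * b) = ρ a * ρ b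
  map_star : ∀ a ∈ S, ρ (star a) = star (ρ a)
  map_one : ρ 1 = 1
  normal : @Continuous {b : G →L[ℂ] G // b ∈ S ∧ ‖b‖ ≤ 1} (H →L[ℂ] H)
    (TopologicalSpace.induced (fun b => b.1) (wot G G)) (wot H H) (fun b => ρ b.1)

/-- The space of intertwiners: `x ∈ B(G,H)` with `ρ(b') ∘ x = x ∘ b'` for all `b' ∈ S`. -/
def intertwinerSpace (S : Set (G →L[ℂ] G)) (ρ : (G →L[ℂ] G) → (H →L[ℂ] H)) :
    Set (G →L[ℂ] H) :=
  {x | ∀ b' ∈ S, (ρ b').comp x = x.comp b'}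

/-- The operator `(g,h) ↦ (b g + c h, x g + a h)` on the Hilbert direct sum `G ⊕ H`. -/
def blockOp (b : G →L[ℂ] G) (c : H →L[ℂ] G) (x : G →L[ℂ] H) (a : H →L[ℂ] H) :
    WithLp 2 (G × H) →L[ℂ] WithLp 2 (G × H) :=
  (((WithLp.prodContinuousLinearEquiv 2 ℂ G H).symm : G × H →L[ℂ] WithLp 2 (G × H)).comp
      (((b.comp (ContinuousLinearMap.fst ℂ G H) + c.comp (ContinuousLinearMap.snd ℂ G H)).prod
        (x.comp (ContinuousLinearMap.fst ℂ G H) +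
          a.comp (ContinuousLinearMap.snd ℂ G H))))).comp
    ((WithLp.prodContinuousLinearEquiv 2 ℂ G H : WithLp 2 (G × H) ≃L[ℂ] G × H) :
      WithLp 2 (G × H) →L[ℂ] G × H)

/-- The `11` entry of an operator on `G ⊕ H`. -/
def block11 (S : WithLp 2 (G × H) →L[ℂ] WithLp 2 (G × H)) : G →L[ℂ] G :=
  (ContinuousLinearMap.fst ℂ G H).comp
    ((((WithLp.prodContinuousLinearEquiv 2 ℂ G H : WithLp 2 (G × H) ≃L[ℂ] G × H) :
        WithLp 2 (G × H) →L[ℂ] G × H).comp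
      (S.comp ((WithLp.prodContinuousLinearEquiv 2 ℂ G H).symm :
        G × H →L[ℂ] WithLp 2 (G × H)))).comp (ContinuousLinearMap.inl ℂ G H))

/-- The `12` entry of an operator on `G ⊕ H`. -/
def block12 (S : WithLp 2 (G × H) →L[ℂ] WithLp 2 (G × H)) : H →L[ℂ] G :=
  (ContinuousLinearMap.fst ℂ G H).comp
    ((((WithLp.prodContinuousLinearEquiv 2 ℂ G H : WithLp 2 (G × H) ≃L[ℂ] G × H) :
        WithLp 2 (G × H) →L[ℂ] G × H).comp
      (S.comp ((WithLp.prodContinuousLinearEquiv 2 ℂ G H).symm :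
        G × H →L[ℂ] WithLp 2 (G × H)))).comp (ContinuousLinearMap.inr ℂ G H))

/-- The `21` entry of an operator on `G ⊕ H`. -/
def block21 (S : WithLp 2 (G × H) →L[ℂ] WithLp 2 (G × H)) : G →L[ℂ] H :=
  (ContinuousLinearMap.snd ℂ G H).comp
    ((((WithLp.prodContinuousLinearEquiv 2 ℂ G H : WithLp 2 (G × H) ≃L[ℂ] G × H) :
        WithLp 2 (G × H) →L[ℂ] G × H).comp
      (S.comp ((WithLp.prodContinuousLinearEquiv 2 ℂ G H).symm :
        G × H →L[ℂ] WithLp 2 (G × H)))).comp (ContinuousLinearMap.inl ℂ G H))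

/-- The `22` entry of an operator on `G ⊕ H`. -/
def block22 (S : WithLp 2 (G × H) →L[ℂ] WithLp 2 (G × H)) : H →L[ℂ] H :=
  (ContinuousLinearMap.snd ℂ G H).comp
    ((((WithLp.prodContinuousLinearEquiv 2 ℂ G H : WithLp 2 (G × H) ≃L[ℂ] G × H) :
        WithLp 2 (G × H) →L[ℂ] G × H).comp
      (S.comp ((WithLp.prodContinuousLinearEquiv 2 ℂ G H).symm :
        G × H →L[ℂ] WithLp 2 (G × H)))).comp (ContinuousLinearMap.inr ℂ G H))

/-! An operator commutes with all `b' ⊕ ρ'(b')` iff its four blocks satisfy the corresponding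
intertwining relations, so everything reduces to showing that every intertwiner `x`
(`ρ'(b') x = x b'` for `b' ∈ B'`) lies in `E`. The operators `a` on `H` with `a x, a* x ∈ E` for
all intertwiners `x` form a `*`-algebra containing every `y y*`, `y ∈ E`; it acts nondegenerately
because `E G` spans a dense subspace. Von Neumann's density argument, run in a finite ampliation
`H ⊕ ⋯ ⊕ H`, then exhibits `x` as a weak-operator limit of the operators `a* x ∈ E`, and `E` is
weak-operator closed. -/

open ContinuousLinearMap
open scoped InnerProductSpace Topology

theorem mem_closure_of_forall_finset_restrict {ι : Type*} {X : ι → Type*}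
    [∀ i, TopologicalSpace (X i)] {S : Set (∀ i, X i)} {f : ∀ i, X i}
    (h : ∀ s : Finset ι, s.restrict f ∈ closure (s.restrict '' S)) : f ∈ closure S := by
  refine mem_closure_iff.2 fun o ho hfo => ?_
  obtain ⟨I, u, hu, hIu⟩ := isOpen_pi_iff.1 ho f hfo
  have hopen : IsOpen (Set.univ.pi fun i : I => u i) :=
    isOpen_set_pi Set.finite_univ fun i _ => (hu i i.2).1
  obtain ⟨_, hTu, T, hT, rfl⟩ :=
    mem_closure_iff.1 (h I) _ hopen fun i _ => (hu i i.2).2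
  exact ⟨T, hIu fun i hi => hTu ⟨i, hi⟩ trivial, hT⟩

section

variable {G H : Type*} [NormedAddCommGroup G] [InnerProductSpace ℂ G]
  [NormedAddCommGroup H] [InnerProductSpace ℂ H]

theorem wot_eq_induced : wot G H = TopologicalSpace.induced
    (fun (T : G →L[ℂ] H) (p : G × H) => ⟪p.2, T p.1⟫_ℂ) Pi.topologicalSpace := by
  simp only [wot, Pi.topologicalSpace, induced_iInf, induced_compose]
  rfl

theorem mem_closure_wot_of_forall_finset {C : Set (G →L[ℂ] H)} {x : G →L[ℂ] H}
    (h : ∀ s : Finset (G × H), (fun p : s => ⟪p.1.2, x p.1.1⟫_ℂ) ∈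
      closure ((fun (T : G →L[ℂ] H) (p : s) => ⟪p.1.2, T p.1.1⟫_ℂ) '' C)) :
    x ∈ closure[wot G H] C := by
  rw [wot_eq_induced, closure_induced]
  refine mem_closure_of_forall_finset_restrict fun s => ?_
  rw [Set.image_image]
  exact h s

variable (b b₂ : G →L[ℂ] G) (c c₂ : H →L[ℂ] G) (x x₂ : G →L[ℂ] H) (a a₂ : H →L[ℂ] H)

@[simp] theorem block11_blockOp : block11 (blockOp b c x a) = b := by ext; simp [block11, blockOp]
@[simp] theorem block12_blockOp : block12 (blockOp b c x a) = c := by ext; simp [block12, blockOp]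
@[simp] theorem block21_blockOp : block21 (blockOp b c x a) = x := by ext; simp [block21, blockOp]
@[simp] theorem block22_blockOp : block22 (blockOp b c x a) = a := by ext; simp [block22, blockOp]

theorem blockOp_block (S : WithLp 2 (G × H) →L[ℂ] WithLp 2 (G × H)) :
    blockOp (block11 S) (block12 S) (block21 S) (block22 S) = S := by
  ext v
  have hv : v = WithLp.toLp 2 (v.fst, 0) + WithLp.toLp 2 (0, v.snd) := by
    rw [WithLp.ext_iff]; ext <;> simp
  conv_rhs => rw [hv, map_add]
  rw [WithLp.ext_iff]
  ext <;> simp [blockOp, block11, block12, block21, block22]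

theorem blockOp_mul_blockOp :
    blockOp b c x a * blockOp b₂ c₂ x₂ a₂ =
      blockOp (b ∘L b₂ + c ∘L x₂) (b ∘L c₂ + c ∘L a₂) (x ∘L b₂ + a ∘L x₂) (x ∘L c₂ + a ∘L a₂) := by
  ext v; simp [blockOp, add_add_add_comm]

theorem blockOp_inj :
    blockOp b c x a = blockOp b₂ c₂ x₂ a₂ ↔ b = b₂ ∧ c = c₂ ∧ x = x₂ ∧ a = a₂ := by
  refine ⟨fun h => ?_, by rintro ⟨rfl, rfl, rfl, rfl⟩; rfl⟩
  refine ⟨?_, ?_, ?_, ?_⟩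
  · simpa using congrArg block11 h
  · simpa using congrArg block12 h
  · simpa using congrArg block21 h
  · simpa using congrArg block22 h

theorem commute_blockOp_diag_iff (S : WithLp 2 (G × H) →L[ℂ] WithLp 2 (G × H)) :
    S * blockOp b 0 0 a = blockOp b 0 0 a * S ↔
      b * block11 S = block11 S * b ∧ a ∘L block21 S = block21 S ∘L b ∧
        block12 S ∘L a = b ∘L block12 S ∧ block22 S * a = a * block22 S := by
  rw [← blockOp_block S, blockOp_mul_blockOp, blockOp_mul_blockOp, blockOp_inj]
  simp only [block11_blockOp, block12_blockOp, block21_blockOp, block22_blockOp, zero_comp,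
    comp_zero, add_zero, zero_add, mul_def]
  exact ⟨fun ⟨h11, h12, h21, h22⟩ => ⟨h11.symm, h21.symm, h12, h22⟩,
    fun ⟨h11, h21, h12, h22⟩ => ⟨h11.symm, h12, h21.symm, h22⟩⟩

end

/-- The closure `W` of `A v` is `A`-invariant, hence so is `Wᗮ` as `A` is `*`-closed; the
component of `v` in `Wᗮ` is therefore killed by `A`, so it vanishes. -/
theorem NonUnitalStarSubalgebra.mem_closure_image_apply
    (A : NonUnitalStarSubalgebra ℂ (K →L[ℂ] K)) (hA : ∀ v : K, (∀ a ∈ A, a v = 0) → v = 0)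
    (v : K) : v ∈ closure ((fun a : K →L[ℂ] K => a v) '' A) := by
  set V : Submodule ℂ K := A.toNonUnitalSubalgebra.toSubmodule.map (apply ℂ K v).toLinearMap
  set W : Submodule ℂ K := V.topologicalClosure
  have : CompleteSpace W := V.isClosed_topologicalClosure.completeSpace_coe
  have hAW : ∀ a ∈ A, ∀ w ∈ W, a w ∈ W := by
    intro a ha
    refine (Module.End.mem_invtSubmodule _).1 (V.topologicalClosure_mem_invtSubmodule ?_)
    rintro _ ⟨b, hb, rfl⟩
    exact ⟨a * b, A.mul_mem ha hb, rfl⟩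
  set k := v - W.starProjection v
  have hk : k ∈ Wᗮ := W.sub_starProjection_mem_orthogonal v
  have hAk : ∀ a ∈ A, a k = 0 := by
    intro a ha
    have hW : a k ∈ W := by
      rw [map_sub]
      exact W.sub_mem (V.le_topologicalClosure ⟨a, ha, rfl⟩)
        (hAW a ha _ (W.starProjection_apply_mem v))
    have hWperp : a k ∈ Wᗮ := fun w hw => by
      rw [← adjoint_inner_left, ← star_eq_adjoint]
      exact hk _ (hAW _ (star_mem ha) w hw)
    simpa [W.inf_orthogonal_eq_bot] using Submodule.mem_inf.2 ⟨hW, hWperp⟩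
  have hvW : v ∈ W := W.starProjection_eq_self_iff.1 (sub_eq_zero.1 (hA k hAk)).symm
  rwa [← SetLike.mem_coe, Submodule.topologicalClosure_coe, Submodule.map_coe] at hvW

section Ampliation

variable (H) (ι : Type*) [Fintype ι]

def ampliation :
    (H →L[ℂ] H) →⋆ₙₐ[ℂ] (PiLp 2 (fun _ : ι => H) →L[ℂ] PiLp 2 (fun _ : ι => H)) where
  toFun a := (PiLp.continuousLinearEquiv 2 ℂ (fun _ : ι => H)).symm.toContinuousLinearMap ∘L
    ContinuousLinearMap.pi fun i => a ∘L PiLp.proj 2 (fun _ => H) i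
  map_smul' c a := by ext; simp
  map_zero' := by ext; simp
  map_add' a b := by ext; simp
  map_mul' a b := by ext; simp
  map_star' a := by
    simp only [star_eq_adjoint]
    refine (eq_adjoint_iff _ _).2 fun v w => ?_
    simp [PiLp.inner_apply, adjoint_inner_left]

variable {H ι}

@[simp]
theorem ampliation_apply (a : H →L[ℂ] H) (v : PiLp 2 (fun _ : ι => H)) (i : ι) :
    ampliation H ι a v i = a (v i) :=
  rfl

end Ampliation

theorem NonUnitalStarSubalgebra.mem_closure_image_ampliation_apply {ι : Type*} [Fintype ι]
    (A : NonUnitalStarSubalgebra ℂ (H →L[ℂ] H)) (hA : ∀ v : H, (∀ a ∈ A, a v = 0) → v = 0)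
    (v : PiLp 2 (fun _ : ι => H)) : v ∈ closure ((fun a => ampliation H ι a v) '' A) := by
  have hAι : ∀ w, (∀ b ∈ A.map (ampliation H ι), b w = 0) → w = 0 := fun w hw => by
    ext i
    exact hA _ fun a ha => congrArg (· i) (hw (ampliation H ι a) ⟨a, ha, rfl⟩)
  simpa [Set.image_image] using (A.map (ampliation H ι)).mem_closure_image_apply hAι v

theorem VonNeumannAlgebra.mem_iff_forall_mem_commutant {B : VonNeumannAlgebra G}
    {a : G →L[ℂ] G} : a ∈ B ↔ ∀ b' ∈ B.commutant, b' * a = a * b' := by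
  conv_lhs => rw [← B.commutant_commutant]
  exact VonNeumannAlgebra.mem_commutant_iff

namespace SpansDensely

variable {E : Set (G →L[ℂ] H)}

theorem eq_zero_of_forall_adjoint_apply_eq_zero (hE : SpansDensely E) {v : H}
    (hv : ∀ x ∈ E, adjoint x v = 0) : v = 0 := by
  have : innerSL ℂ v = 0 := ContinuousLinearMap.ext_on hE fun _ ⟨x, hx, g, hxg⟩ => by
    simp [← hxg, ← adjoint_inner_left, hv x hx]
  simpa using congrArg (· v) this

theorem ext_adjoint_comp (hE : SpansDensely E) {T T' : H →L[ℂ] H}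
    (h : ∀ x ∈ E, ∀ y ∈ E, adjoint y ∘L T ∘L x = adjoint y ∘L T' ∘L x) : T = T' := by
  refine ContinuousLinearMap.ext_on hE ?_
  rintro _ ⟨x, hx, g, rfl⟩
  refine sub_eq_zero.1 (hE.eq_zero_of_forall_adjoint_apply_eq_zero fun y hy => ?_)
  simpa [sub_eq_zero] using DFunLike.congr_fun (h x hx y hy) g

end SpansDensely

namespace IsConcreteVNModule

variable {B : VonNeumannAlgebra G} {E : Set (G →L[ℂ] H)} {ρ' : (G →L[ℂ] G) → (H →L[ℂ] H)}

theorem adjoint_map_eq_map_star (hE : IsConcreteVNModule B E)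
    (hρ : E ⊆ intertwinerSpace B.commutant ρ') {b' : G →L[ℂ] G} (hb' : b' ∈ B.commutant) :
    adjoint (ρ' b') = ρ' (star b') := by
  refine hE.dense.ext_adjoint_comp fun x hx y hy => ?_
  have hyx : adjoint y ∘L x ∈ B := hE.adjoint_comp_mem y hy x hx
  calc adjoint y ∘L adjoint (ρ' b') ∘L x = adjoint (ρ' b' ∘L y) ∘L x := by
        rw [adjoint_comp, comp_assoc]
    _ = star b' * (adjoint y ∘L x) := by
        rw [hρ hy b' hb', adjoint_comp, star_eq_adjoint, mul_def, comp_assoc]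
    _ = (adjoint y ∘L x) * star b' :=
        (VonNeumannAlgebra.mem_commutant_iff.1 (star_mem hb') _ hyx).symm
    _ = adjoint y ∘L ρ' (star b') ∘L x := by
        rw [hρ hx _ (star_mem hb'), mul_def, comp_assoc]

theorem adjoint_mem_intertwinerSpace_iff (hE : IsConcreteVNModule B E)
    (hρ : E ⊆ intertwinerSpace B.commutant ρ') {c : H →L[ℂ] G} :
    adjoint c ∈ intertwinerSpace B.commutant ρ' ↔
      ∀ b' ∈ B.commutant, c ∘L ρ' b' = b' ∘L c := by
  have key : ∀ b' ∈ B.commutant,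
      ρ' b' ∘L adjoint c = adjoint c ∘L b' ↔ c ∘L ρ' (star b') = star b' ∘L c := by
    intro b' hb'
    rw [← (adjoint (𝕜 := ℂ) (E := G) (F := H)).injective.eq_iff, adjoint_comp, adjoint_comp,
      adjoint_adjoint, hE.adjoint_map_eq_map_star hρ hb', star_eq_adjoint]
  refine ⟨fun h b' hb' => ?_, fun h b' hb' => (key b' hb').2 (h _ (star_mem hb'))⟩
  simpa using (key _ (star_mem hb')).1 (h _ (star_mem hb'))

theorem adjoint_comp_mem_of_mem_intertwinerSpace (hE : IsConcreteVNModule B E)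
    (hρ : E ⊆ intertwinerSpace B.commutant ρ') {x y : G →L[ℂ] H}
    (hx : x ∈ intertwinerSpace B.commutant ρ') (hy : y ∈ E) : adjoint y ∘L x ∈ B := by
  refine VonNeumannAlgebra.mem_iff_forall_mem_commutant.2 fun b' hb' => ?_
  have hy' := (hE.adjoint_mem_intertwinerSpace_iff hρ).1 ((adjoint_adjoint y).symm ▸ hρ hy) b' hb'
  calc b' * (adjoint y ∘L x) = adjoint y ∘L ρ' b' ∘L x := by
        rw [mul_def, ← comp_assoc, ← hy', comp_assoc]
    _ = (adjoint y ∘L x) * b' := by rw [hx b' hb', mul_def, comp_assoc]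

def intertwinerMultipliers (hE : IsConcreteVNModule B E)
    (hρ : E ⊆ intertwinerSpace B.commutant ρ') : NonUnitalStarSubalgebra ℂ (H →L[ℂ] H) where
  carrier := {a | ∀ x ∈ intertwinerSpace B.commutant ρ', a ∘L x ∈ E ∧ adjoint a ∘L x ∈ E}
  zero_mem' x _ := by simp [hE.zero_mem]
  add_mem' ha hb x hx := by
    simpa [add_comp] using
      ⟨hE.add_mem _ (ha x hx).1 _ (hb x hx).1, hE.add_mem _ (ha x hx).2 _ (hb x hx).2⟩
  smul_mem' c a ha x hx := by
    simpa [smul_comp, map_smulₛₗ] using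
      ⟨hE.smul_mem c _ (ha x hx).1, hE.smul_mem (starRingEnd ℂ c) _ (ha x hx).2⟩
  mul_mem' ha hb x hx := by
    simpa [mul_def, comp_assoc] using ⟨(ha _ (hρ (hb x hx).1)).1, (hb _ (hρ (ha x hx).2)).2⟩
  star_mem' ha x hx := by simpa [star_eq_adjoint, and_comm] using ha x hx

theorem comp_adjoint_mem_intertwinerMultipliers (hE : IsConcreteVNModule B E)
    (hρ : E ⊆ intertwinerSpace B.commutant ρ') {y : G →L[ℂ] H} (hy : y ∈ E) :
    y ∘L adjoint y ∈ hE.intertwinerMultipliers hρ := by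
  have hyy : adjoint (y ∘L adjoint y) = y ∘L adjoint y := by rw [adjoint_comp, adjoint_adjoint]
  intro x hx
  rw [hyy, and_self, comp_assoc]
  exact hE.comp_mem y hy _ (hE.adjoint_comp_mem_of_mem_intertwinerSpace hρ hx hy)

theorem intertwinerMultipliers_nondegenerate (hE : IsConcreteVNModule B E)
    (hρ : E ⊆ intertwinerSpace B.commutant ρ') (v : H)
    (hv : ∀ a ∈ hE.intertwinerMultipliers hρ, a v = 0) : v = 0 := by
  refine hE.dense.eq_zero_of_forall_adjoint_apply_eq_zero fun y hy => ?_
  have hyyv : y (adjoint y v) = 0 := hv _ (hE.comp_adjoint_mem_intertwinerMultipliers hρ hy)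
  rw [← inner_self_eq_zero (𝕜 := ℂ), adjoint_inner_left, hyyv, inner_zero_right]

theorem intertwinerSpace_subset (hE : IsConcreteVNModule B E)
    (hρ : E ⊆ intertwinerSpace B.commutant ρ') : intertwinerSpace B.commutant ρ' ⊆ E := by
  intro x hx
  refine @IsClosed.closure_subset _ (wot G H) _ hE.isClosed x
    (mem_closure_wot_of_forall_finset fun s => ?_)
  have hcont : Continuous fun v : PiLp 2 (fun _ : s => H) => fun p : s => ⟪v p, x p.1.1⟫_ℂ := by
    fun_prop
  refine map_mem_closure hcont ((hE.intertwinerMultipliers hρ).mem_closure_image_ampliation_apply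
    (hE.intertwinerMultipliers_nondegenerate hρ) (WithLp.toLp 2 fun p => p.1.2)) ?_
  rintro _ ⟨a, ha, rfl⟩
  refine ⟨adjoint a ∘L x, (ha x hx).2, ?_⟩
  ext p
  simp [adjoint_inner_right]

theorem intertwinerSpace_eq (hE : IsConcreteVNModule B E)
    (hρ : E ⊆ intertwinerSpace B.commutant ρ') : intertwinerSpace B.commutant ρ' = E :=
  (hE.intertwinerSpace_subset hρ).antisymm hρ

end IsConcreteVNModule

/-- `S ∈ B(G ⊕ H)` commutes with all `(g,h) ↦ (b' g, ρ'(b') h)`, `b' ∈ B'`,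
if and only if `S₁₁ ∈ B`, `S₂₁ ∈ E`, `S₁₂* ∈ E` and `S₂₂` commutes with `ρ'(B')`. -/
theorem stmt13 (B : VonNeumannAlgebra G) (E : Set (G →L[ℂ] H))
    (hE : IsConcreteVNModule B E)
    (ρ' : (G →L[ℂ] G) → (H →L[ℂ] H))
    (hρ : ∀ b' ∈ B.commutant, ∀ x ∈ E, (ρ' b').comp x = x.comp b')
    (S : WithLp 2 (G × H) →L[ℂ] WithLp 2 (G × H)) :
    (∀ b' ∈ B.commutant, S * blockOp b' 0 0 (ρ' b') = blockOp b' 0 0 (ρ' b') * S)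
      ↔ (block11 S ∈ B ∧ block21 S ∈ E ∧ ContinuousLinearMap.adjoint (block12 S) ∈ E ∧
          ∀ b' ∈ B.commutant, block22 S * ρ' b' = ρ' b' * block22 S) := by
  have hρE : E ⊆ intertwinerSpace B.commutant ρ' := fun x hx b' hb' => hρ b' hb' x hx
  rw [← hE.intertwinerSpace_eq hρE, hE.adjoint_mem_intertwinerSpace_iff hρE,
    VonNeumannAlgebra.mem_iff_forall_mem_commutant]
  simp only [commute_blockOp_diag_iff, intertwinerSpace, Set.mem_ofPred_eq, SetLike.mem_coe,
    imp_and, forall_and]
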